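/- Let B, T, T_GI, f_LPF > 0 with f_LPF ≥ B·T_GI/T, and let K = BT. Suppose k, k' are reals with |k' − k| ≤ K − B·T_GI − f_LPF·T. Then for every τ with 0 ≤ τ < T_GI, |Bτ/T + (k' − k)/T + B| > f_LPF and |Bτ/T + (k' − k)/T − B| > f_LPF. (I.e., the spectrum-folded image frequencies lie outside the filter passband.) -/

import Mathlib

theorem folded_images_outside_LPF
    (B T T_GI f_LPF : ℝ) (hB : 0 < B) (hT : 0 < T) (hGI : 0 < T_GI) (hf : 0 < f_LPF)
    (hfGI : f_LPF ≥ B * T_GI / T)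
    (K : ℝ) (hK : K = B * T)
    (k k' : ℝ) (hsep : |k' - k| ≤ K - B * T_GI - f_LPF * T)
    (τ : ℝ) (hτ0 : 0 ≤ τ) (hτ : τ < T_GI) :
    |B * τ / T + (k' - k) / T + B| > f_LPF ∧ |B * τ / T + (k' - k) / T - B| > f_LPF := by
  obtain ⟨h1, h2⟩ := abs_le.mp hsep
  subst hK
  have hT' := hT.le
  have hd : B * T_GI / T ≤ f_LPF := hfGI
  constructor
  · have : B * τ / T + (k' - k) / T + B > f_LPF := by
      rw [← add_div, gt_iff_lt, ← sub_lt_iff_lt_add, lt_div_iff₀ hT]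
      nlinarith [mul_nonneg hB.le hτ0]
    exact lt_of_lt_of_le this (le_abs_self _)
  · have : B * τ / T + (k' - k) / T - B < -f_LPF := by
      rw [← add_div, sub_lt_iff_lt_add, div_lt_iff₀ hT]
      nlinarith [mul_nonneg hB.le hτ0, mul_lt_mul_of_pos_left hτ hB]
    calc f_LPF < -(B * τ / T + (k' - k) / T - B) := by linarith
    _ ≤ |B * τ / T + (k' - k) / T - B| := neg_le_abs _
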